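/- arXiv:0704.3448 — 2 statements merged into one kernel-verified Lean document; each statement's English description precedes it below -/
import Mathlib

section
/- There is a positive absolute constant C₀ such that if s = σ + it with 0 ≤ σ ≤ 1 and |t| ≥ C₀ satisfies |χ(s)| = 1, then σ = 1/2. -/
open Complex Filter

/-- The weighted von Mangoldt function `Λ_X`. -/
noncomputable def LambdaX (X : ℝ) (n : ℕ) : ℝ :=
  if (n : ℝ) ≤ X then ArithmeticFunction.vonMangoldt n
  else if (n : ℝ) ≤ X ^ 2 then ArithmeticFunction.vonMangoldt n * (2 - Real.log n / Real.log X)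
  else 0

/-- The weighted Euler product `P_X(s) = exp(∑_{n ≤ X²} Λ_X(n)/(n^s log n))`. -/
noncomputable def PX (X : ℝ) (s : ℂ) : ℂ :=
  Complex.exp (∑ n ∈ Finset.Icc 1 ⌊X ^ 2⌋₊, (LambdaX X n : ℂ) / ((n : ℂ) ^ s * (Real.log n : ℂ)))

/-- The factor `χ(s) = π^(s-1/2) Γ((1-s)/2)/Γ(s/2)` in the functional equation of `ζ`. -/
noncomputable def chiFE (s : ℂ) : ℂ :=
  (Real.pi : ℂ) ^ (s - 1 / 2) * Complex.Gamma ((1 - s) / 2) / Complex.Gamma (s / 2)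

/-- `ζ_X(s) = P_X(s) + χ(s) P_X(s̄)`. -/
noncomputable def zetaX (X : ℝ) (s : ℂ) : ℂ :=
  PX X s + chiFE s * PX X ((starRingEnd ℂ) s)

/-!
Since `|χ(σ + it)| = π^(σ - 1/2) |Γ((1 - σ)/2 + i|t|/2)| / |Γ(σ/2 + i|t|/2)|`, it suffices
that `π^δ |Γ(x + iy)| < |Γ(x + δ + iy)|` for `x ≥ 0`, `δ > 0` and large `y`: whichever of
`σ/2` and `(1 - σ)/2` is larger then decides whether `|χ|` is above or below `1`.
By Euler's limit formula, `|Γ(x + δ + iy)|² / |Γ(x + iy)|²` is the limit of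
`n^(2δ) ∏_{j ≤ n} ((x + j)² + y²) / ((x + δ + j)² + y²)`. Bounding the log of each factor
by `log a - log b ≤ (a - b)/b` and comparing the resulting sums with telescoping ones shows
that this ratio is at least `(y/2)^(2δ) e^(-2δ(1 + δ)/(y - 1))`, which beats `π^(2δ)` once
`y ≥ 50`.
-/

open Finset

lemma Real.log_sub_log_le_sub_div {a b : ℝ} (ha : 0 < a) (hb : 0 < b) :
    Real.log a - Real.log b ≤ (a - b) / b := by
  have h := Real.log_le_sub_one_of_pos (div_pos ha hb)
  rwa [Real.log_div ha.ne' hb.ne', div_sub_one hb.ne'] at h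

lemma Real.sub_div_le_log_sub_log {a b : ℝ} (ha : 0 < a) (hb : 0 < b) :
    (a - b) / a ≤ Real.log a - Real.log b := by
  have h := Real.one_sub_inv_le_log_of_pos (div_pos ha hb)
  rwa [Real.log_div ha.ne' hb.ne', inv_div, one_sub_div ha.ne'] at h

lemma sum_range_inv_sq_add_sq_le {x y : ℝ} (hxy : 1 < x + y) (n : ℕ) :
    ∑ j ∈ range (n + 1), 1 / ((x + j) ^ 2 + y ^ 2) ≤ 2 / (x + y - 1) := by
  have hterm : ∀ j : ℕ, 1 / ((x + j) ^ 2 + y ^ 2)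
      ≤ 2 / (x + y - 1 + j) - 2 / (x + y - 1 + (j + 1 : ℕ)) := by
    intro j
    have hv : 0 < x + y - 1 + j := by linarith [j.cast_nonneg (α := ℝ)]
    have hq : 0 < (x + j) ^ 2 + y ^ 2 := by nlinarith [sq_nonneg (x + j - y)]
    push_cast
    rw [div_sub_div _ _ hv.ne' (by linarith), div_le_div_iff₀ hq (by nlinarith)]
    nlinarith [sq_nonneg (x + j - y)]
  calc ∑ j ∈ range (n + 1), 1 / ((x + j) ^ 2 + y ^ 2)
      ≤ ∑ j ∈ range (n + 1), (2 / (x + y - 1 + j) - 2 / (x + y - 1 + (j + 1 : ℕ))) :=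
        sum_le_sum fun j _ => hterm j
    _ = 2 / (x + y - 1) - 2 / (x + y - 1 + (n + 1 : ℕ)) := by
        rw [sum_range_sub' (fun j : ℕ => 2 / (x + y - 1 + j))]; simp
    _ ≤ 2 / (x + y - 1) := sub_le_self _ (by positivity)

lemma sum_range_two_mul_sub_one_div_le (x : ℝ) {y : ℝ} (hy : y ≠ 0) (n : ℕ) :
    ∑ j ∈ range (n + 1), (2 * (x + j) - 1) / ((x + j) ^ 2 + y ^ 2)
      ≤ Real.log ((x + n) ^ 2 + y ^ 2) - Real.log ((x - 1) ^ 2 + y ^ 2) := by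
  set f : ℕ → ℝ := fun k => Real.log ((x - 1 + k) ^ 2 + y ^ 2)
  have hterm : ∀ j : ℕ, (2 * (x + j) - 1) / ((x + j) ^ 2 + y ^ 2) ≤ f (j + 1) - f j := by
    intro j
    have h := Real.sub_div_le_log_sub_log (a := (x + j) ^ 2 + y ^ 2)
      (b := (x - 1 + j) ^ 2 + y ^ 2) (by positivity) (by positivity)
    simp only [f]
    push_cast
    rw [show x - 1 + ((j : ℝ) + 1) = x + j by ring]
    convert h using 2
    ring
  calc ∑ j ∈ range (n + 1), (2 * (x + j) - 1) / ((x + j) ^ 2 + y ^ 2)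
      ≤ ∑ j ∈ range (n + 1), (f (j + 1) - f j) := sum_le_sum fun j _ => hterm j
    _ = _ := by rw [sum_range_sub]; simp only [f]; push_cast; ring_nf

lemma sum_log_sq_add_sq_shift_le {x y δ : ℝ} (hx : 0 ≤ x) (hδ : 0 ≤ δ) (hy : 1 < y) {n : ℕ}
    (hn : x + y ≤ n) :
    ∑ j ∈ range (n + 1), (Real.log ((x + δ + j) ^ 2 + y ^ 2) - Real.log ((x + j) ^ 2 + y ^ 2))
      ≤ 2 * δ * (Real.log n - Real.log (y / 2) + (1 + δ) / (y - 1)) := by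
  have hterm : ∀ j : ℕ,
      Real.log ((x + δ + j) ^ 2 + y ^ 2) - Real.log ((x + j) ^ 2 + y ^ 2)
        ≤ δ * ((2 * (x + j) - 1) / ((x + j) ^ 2 + y ^ 2))
          + (δ + δ ^ 2) * (1 / ((x + j) ^ 2 + y ^ 2)) := by
    intro j
    refine (Real.log_sub_log_le_sub_div (by positivity) (by positivity)).trans_eq ?_
    field_simp
    ring
  have hn0 : (0 : ℝ) < n := by linarith
  have hlog_top : Real.log ((x + n) ^ 2 + y ^ 2) ≤ 2 * Real.log (2 * n) := by
    rw [← Real.log_rpow (by linarith), Real.rpow_two]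
    exact Real.log_le_log (by positivity) (by nlinarith)
  have hlog_bot : 2 * Real.log y ≤ Real.log ((x - 1) ^ 2 + y ^ 2) := by
    rw [← Real.log_rpow (by linarith), Real.rpow_two]
    exact Real.log_le_log (by positivity) (by nlinarith)
  have hT := sum_range_inv_sq_add_sq_le (x := x) (y := y) (by linarith) n
  have hT' : 2 / (x + y - 1) ≤ 2 / (y - 1) :=
    div_le_div_of_nonneg_left zero_le_two (by linarith) (by linarith)
  have hS := sum_range_two_mul_sub_one_div_le x (y := y) (by positivity) n
  calc _ ≤ ∑ j ∈ range (n + 1), (δ * ((2 * (x + j) - 1) / ((x + j) ^ 2 + y ^ 2))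
          + (δ + δ ^ 2) * (1 / ((x + j) ^ 2 + y ^ 2))) := sum_le_sum fun j _ => hterm j
    _ = δ * ∑ j ∈ range (n + 1), (2 * (x + j) - 1) / ((x + j) ^ 2 + y ^ 2)
          + (δ + δ ^ 2) * ∑ j ∈ range (n + 1), 1 / ((x + j) ^ 2 + y ^ 2) := by
        rw [sum_add_distrib, mul_sum, mul_sum]
    _ ≤ δ * (2 * Real.log (2 * n) - 2 * Real.log y) + (δ + δ ^ 2) * (2 / (y - 1)) := by
        gcongr
        · linarith
        · linarith
    _ = _ := by
        rw [Real.log_mul two_ne_zero hn0.ne', Real.log_div (by positivity) two_ne_zero]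
        field_simp
        ring

lemma norm_GammaSeq_sq (z : ℂ) {n : ℕ} (hn : n ≠ 0) :
    ‖GammaSeq z n‖ ^ 2
      = (n : ℝ) ^ (2 * z.re) * (n.factorial : ℝ) ^ 2
        / ∏ j ∈ range (n + 1), ((z.re + j) ^ 2 + z.im ^ 2) := by
  have hprod : ‖∏ j ∈ range (n + 1), (z + j)‖ ^ 2
      = ∏ j ∈ range (n + 1), ((z.re + j) ^ 2 + z.im ^ 2) := by
    rw [norm_prod, ← prod_pow]
    refine prod_congr rfl fun j _ => ?_
    rw [Complex.sq_norm, Complex.normSq_apply]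
    simp only [add_re, natCast_re, add_im, natCast_im, add_zero]
    ring
  rw [GammaSeq, norm_div, norm_mul, div_pow, mul_pow, hprod,
    norm_natCast_cpow_of_pos (Nat.pos_of_ne_zero hn), ← Real.rpow_natCast,
    ← Real.rpow_mul (Nat.cast_nonneg n), Complex.norm_natCast]
  norm_num [mul_comm]

lemma Real.prod_eq_exp_sum_log {ι : Type*} {s : Finset ι} {f : ι → ℝ}
    (hf : ∀ i ∈ s, 0 < f i) :
    ∏ i ∈ s, f i = Real.exp (∑ i ∈ s, Real.log (f i)) := by
  rw [Real.exp_sum]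
  exact prod_congr rfl fun i hi => (Real.exp_log (hf i hi)).symm

lemma exp_mul_norm_GammaSeq_le {x y δ : ℝ} (hx : 0 ≤ x) (hδ : 0 ≤ δ) (hy : 1 < y) {n : ℕ}
    (hn : x + y ≤ n) :
    Real.exp (δ * (Real.log (y / 2) - (1 + δ) / (y - 1))) * ‖GammaSeq (x + y * I) n‖
      ≤ ‖GammaSeq (↑(x + δ) + y * I) n‖ := by
  have hn0 : (0 : ℝ) < n := by linarith
  have hn' : n ≠ 0 := by exact_mod_cast hn0.ne'
  set K := Real.exp (δ * (Real.log (y / 2) - (1 + δ) / (y - 1)))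
  set P : ℝ → ℝ := fun a => ∏ j ∈ range (n + 1), ((a + j) ^ 2 + y ^ 2)
  have hfactor : ∀ a (j : ℕ), 0 < (a + j) ^ 2 + y ^ 2 := fun a j => by positivity
  have hP : ∀ a, 0 < P a := fun a => prod_pos fun j _ => hfactor a j
  have hkey : K ^ 2 * P (x + δ) ≤ (n : ℝ) ^ (2 * δ) * P x := by
    simp only [P, K]
    rw [Real.prod_eq_exp_sum_log fun j _ => hfactor (x + δ) j,
      Real.prod_eq_exp_sum_log fun j _ => hfactor x j, ← Real.exp_nat_mul,
      Real.rpow_def_of_pos hn0, ← Real.exp_add, ← Real.exp_add, Real.exp_le_exp]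
    have h := sum_log_sq_add_sq_shift_le hx hδ hy hn
    rw [sum_sub_distrib] at h
    push_cast
    linarith
  refine le_of_pow_le_pow_left₀ two_ne_zero (norm_nonneg _) ?_
  rw [mul_pow, norm_GammaSeq_sq _ hn', norm_GammaSeq_sq _ hn']
  simp only [add_re, ofReal_re, mul_re, I_re, mul_zero, ofReal_im, I_im, mul_one, sub_self,
    add_zero, add_im, mul_im, zero_add]
  change K ^ 2 * (_ * _ / P x) ≤ _ * _ / P (x + δ)
  rw [mul_div_assoc', div_le_div_iff₀ (hP x) (hP _), mul_add, Real.rpow_add hn0]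
  have hF : 0 ≤ (n : ℝ) ^ (2 * x) * (n.factorial : ℝ) ^ 2 := by positivity
  linarith [mul_le_mul_of_nonneg_left hkey hF]

lemma exp_mul_norm_Gamma_le {x y δ : ℝ} (hx : 0 ≤ x) (hδ : 0 ≤ δ) (hy : 1 < y) :
    Real.exp (δ * (Real.log (y / 2) - (1 + δ) / (y - 1))) * ‖Gamma (x + y * I)‖
      ≤ ‖Gamma (↑(x + δ) + y * I)‖ :=
  le_of_tendsto_of_tendsto ((GammaSeq_tendsto_Gamma _).norm.const_mul _)
    (GammaSeq_tendsto_Gamma _).norm <| (eventually_ge_atTop ⌈x + y⌉₊).mono fun _ hn =>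
      exp_mul_norm_GammaSeq_le hx hδ hy (Nat.ceil_le.mp hn)

lemma Gamma_ofReal_add_mul_I_ne_zero (x : ℝ) {y : ℝ} (hy : y ≠ 0) : Gamma (x + y * I) ≠ 0 :=
  Gamma_ne_zero fun m hm => hy <| by simpa using congrArg im hm

lemma rpow_pi_mul_norm_Gamma_lt {x y δ : ℝ} (hx : 0 ≤ x) (hδ : 0 < δ) (hδ1 : δ ≤ 1)
    (hy : 50 ≤ y) :
    Real.pi ^ δ * ‖Gamma (x + y * I)‖ < ‖Gamma (↑(x + δ) + y * I)‖ := by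
  have hlog : Real.log Real.pi < Real.log (y / 2) - (1 + δ) / (y - 1) := by
    have h := Real.one_sub_inv_le_log_of_pos (x := y / 2 / Real.pi) (by positivity)
    rw [Real.log_div (by positivity) Real.pi_ne_zero, inv_div] at h
    have h1 : Real.pi / (y / 2) ≤ 4 / 25 := by
      rw [div_le_iff₀ (by positivity)]; linarith [Real.pi_lt_four]
    have h2 : (1 + δ) / (y - 1) ≤ 2 / 49 := by
      rw [div_le_iff₀ (by linarith)]; nlinarith
    linarith
  have hΓ : 0 < ‖Gamma (x + y * I)‖ :=
    norm_pos_iff.mpr (Gamma_ofReal_add_mul_I_ne_zero x (by linarith))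
  refine lt_of_lt_of_le ?_ (exp_mul_norm_Gamma_le hx hδ.le (by linarith))
  rw [Real.rpow_def_of_pos Real.pi_pos, mul_comm (Real.log _)]
  gcongr

lemma norm_Gamma_ofReal_add_abs_mul_I (x y : ℝ) :
    ‖Gamma (x + |y| * I)‖ = ‖Gamma (x + y * I)‖ := by
  rcases abs_choice y with h | h
  · rw [h]
  · rw [h, ← norm_conj, ← Gamma_conj]
    simp

lemma norm_chiFE (σ t : ℝ) :
    ‖chiFE (σ + t * I)‖ = Real.pi ^ (σ - 1 / 2) * ‖Gamma (↑((1 - σ) / 2) + ↑(|t| / 2) * I)‖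
      / ‖Gamma (↑(σ / 2) + ↑(|t| / 2) * I)‖ := by
  have h1 : (1 - (σ + t * I)) / 2 = ↑((1 - σ) / 2) + ↑(-t / 2) * I := by push_cast; ring
  have h2 : (σ + t * I) / 2 = ↑(σ / 2) + ↑(t / 2) * I := by push_cast; ring
  rw [chiFE, norm_div, norm_mul, norm_cpow_eq_rpow_re_of_pos Real.pi_pos, h1, h2,
    ← norm_Gamma_ofReal_add_abs_mul_I _ (-t / 2), ← norm_Gamma_ofReal_add_abs_mul_I _ (t / 2)]
  simp [abs_div]

lemma norm_chiFE_lt_one {σ t : ℝ} (hσ : 1 / 2 < σ) (hσ1 : σ ≤ 1) (ht : 100 ≤ |t|) :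
    ‖chiFE (σ + t * I)‖ < 1 := by
  have h := rpow_pi_mul_norm_Gamma_lt (x := (1 - σ) / 2) (δ := σ - 1 / 2) (y := |t| / 2)
    (by linarith) (by linarith) (by linarith) (by linarith)
  rw [show (1 - σ) / 2 + (σ - 1 / 2) = σ / 2 by ring] at h
  rw [norm_chiFE, div_lt_one (h.trans_le' (by positivity))]
  exact h

lemma one_lt_norm_chiFE {σ t : ℝ} (hσ0 : 0 ≤ σ) (hσ : σ < 1 / 2) (ht : 100 ≤ |t|) :
    1 < ‖chiFE (σ + t * I)‖ := by
  have h := rpow_pi_mul_norm_Gamma_lt (x := σ / 2) (δ := 1 / 2 - σ) (y := |t| / 2)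
    (by linarith) (by linarith) (by linarith) (by linarith)
  rw [show σ / 2 + (1 / 2 - σ) = (1 - σ) / 2 by ring] at h
  have hΓ : 0 < ‖Gamma (↑(σ / 2) + ↑(|t| / 2) * I)‖ :=
    norm_pos_iff.mpr (Gamma_ofReal_add_mul_I_ne_zero _ (by positivity))
  rw [norm_chiFE, one_lt_div hΓ]
  set Γσ := ‖Gamma (↑(σ / 2) + ↑(|t| / 2) * I)‖
  calc Γσ = Real.pi ^ (σ - 1 / 2) * (Real.pi ^ (1 / 2 - σ) * Γσ) := by
        rw [← mul_assoc, ← Real.rpow_add Real.pi_pos]; simp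
    _ < _ := by gcongr

theorem chiFE_abs_eq_one_imp :
    ∃ C₀ : ℝ, 0 < C₀ ∧ ∀ σ t : ℝ, 0 ≤ σ → σ ≤ 1 → C₀ ≤ |t| →
      ‖chiFE ((σ : ℂ) + t * Complex.I)‖ = 1 → σ = 1 / 2 := by
  refine ⟨100, by norm_num, fun σ t hσ0 hσ1 ht hχ => ?_⟩
  rcases lt_trichotomy σ (1 / 2) with hlt | heq | hgt
  · exact absurd hχ (one_lt_norm_chiFE hσ0 hlt ht).ne'
  · exact heq
  · exact absurd hχ (norm_chiFE_lt_one hgt hσ1 ht).ne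
end

section
/- There is a positive absolute constant C₀ such that for every real X ≥ 2, every zero ρ = β + iγ of ζ_X with 0 ≤ β ≤ 1 and γ ≥ C₀ satisfies β = 1/2 (the Riemann Hypothesis for ζ_X). -/
open Complex Filter

/-!
At a zero `ρ` of `ζ_X` we have `P_X(ρ) = -χ(ρ) P_X(ρ̄)` with `P_X(ρ̄) = conj P_X(ρ) ≠ 0`, so
`|χ(ρ)| = 1`. Writing `ρ = β + iγ`,
`|χ(ρ)| = π^(β-1/2) |Γ((1-β)/2 + iγ/2)| / |Γ(β/2 + iγ/2)|`, and for `0 ≤ v ≤ 1/4`, `t ≥ 2`,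
Euler's product `Γ(s) = lim n^s n! / (s(s+1)⋯(s+n))` gives
`|Γ(1/2 - v + it)|² ≥ (t² e^(-24/t))^(1/2-2v) |Γ(v + it)|²`: each factor ratio is compared with
`(2j+1)/(j²+t²)`, which telescopes against `log((j+1)²+t²) - log(j²+t²)`. For `t` large this
ratio beats the power of `π`, so `|χ(β + iγ)| > 1` for `β < 1/2` and `< 1` for `β > 1/2`.
-/

open ComplexConjugate
open scoped Nat Topology

lemma natCast_cpow_conj (n : ℕ) (s : ℂ) : (n : ℂ) ^ conj s = conj ((n : ℂ) ^ s) := by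
  simpa using conj_cpow (n : ℂ) (conj s) (by rw [natCast_arg]; positivity)

lemma PX_conj (X : ℝ) (s : ℂ) : PX X (conj s) = conj (PX X s) := by
  simp only [PX, ← exp_conj, map_sum, map_div₀, map_mul, conj_ofReal, natCast_cpow_conj]

lemma norm_chiFE_eq_one_of_zetaX_eq_zero {X : ℝ} {ρ : ℂ} (h : zetaX X ρ = 0) :
    ‖chiFE ρ‖ = 1 := by
  have hP : ‖PX X ρ‖ ≠ 0 := norm_ne_zero_iff.2 (exp_ne_zero _)
  have h' : chiFE ρ * PX X (conj ρ) = -PX X ρ := by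
    rw [zetaX] at h
    linear_combination h
  have := congrArg norm h'
  rwa [norm_mul, PX_conj, norm_conj, norm_neg, mul_eq_right₀ hP] at this

lemma Complex.Gamma_ne_zero_of_im_ne_zero {s : ℂ} (hs : s.im ≠ 0) : Gamma s ≠ 0 :=
  Gamma_ne_zero fun m h => hs (by simp [h])

lemma norm_chiFE_eq (β γ : ℝ) :
    ‖chiFE (β + γ * I)‖ = Real.pi ^ (β - 1 / 2) *
      ‖Gamma ((1 - β) / 2 + γ / 2 * I)‖ / ‖Gamma (β / 2 + γ / 2 * I)‖ := by
  have hconj : (1 - (β + γ * I)) / 2 = conj ((1 - β) / 2 + γ / 2 * I) := by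
    simp only [map_add, map_mul, map_div₀, map_sub, map_one, map_ofNat, conj_ofReal, conj_I]
    ring
  have hhalf : (β + γ * I) / 2 = β / 2 + γ / 2 * I := by ring
  rw [chiFE, norm_div, norm_mul, norm_cpow_eq_rpow_re_of_pos Real.pi_pos, hconj, Gamma_conj,
    norm_conj, hhalf]
  simp

lemma normSq_GammaSeq_add_mul_I (x t : ℝ) {n : ℕ} (hn : n ≠ 0) :
    normSq (GammaSeq (x + t * I) n) =
      (n : ℝ) ^ (2 * x) * (n ! : ℝ) ^ 2 / ∏ j ∈ Finset.range (n + 1), ((x + j) ^ 2 + t ^ 2) := by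
  have hx : ∀ j : ℕ, (x : ℂ) + t * I + j = ↑(x + j) + t * I := fun j => by push_cast; ring
  rw [GammaSeq, map_div₀, map_mul, map_prod, ← Complex.sq_norm, norm_natCast_cpow_of_pos (by omega),
    ← Real.rpow_natCast, ← Real.rpow_mul (by positivity), normSq_natCast]
  simp only [hx, normSq_add_mul_I]
  norm_num [mul_comm, sq]

lemma log_sq_add_sq_sub_le {v x t : ℝ} (hv : 0 ≤ v) (hv' : v ≤ 1 / 4) (hx : 0 ≤ x) (ht : 0 < t) :
    Real.log ((1 / 2 - v + x) ^ 2 + t ^ 2) - Real.log ((v + x) ^ 2 + t ^ 2)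
      ≤ (1 / 2 - 2 * v) * ((2 * x + 1) / (x ^ 2 + t ^ 2)) := by
  have hA : 0 < x ^ 2 + t ^ 2 := by positivity
  have hQ : 0 < (v + x) ^ 2 + t ^ 2 := by positivity
  have hlog := Real.log_le_sub_one_of_pos
    (div_pos (by positivity : 0 < (1 / 2 - v + x) ^ 2 + t ^ 2) hQ)
  rw [Real.log_div (by positivity) hQ.ne'] at hlog
  refine hlog.trans ?_
  rw [div_sub_one hQ.ne', mul_div_assoc', div_le_div_iff₀ hQ hA]
  have : (1 / 2 + 2 * x) * (x ^ 2 + t ^ 2) ≤ (2 * x + 1) * ((v + x) ^ 2 + t ^ 2) :=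
    mul_le_mul (by linarith) (by nlinarith) hA.le (by linarith)
  nlinarith [mul_le_mul_of_nonneg_left this (by linarith : 0 ≤ 1 / 2 - 2 * v)]

/-- The logarithmic difference only dominates `(2x+1)/((x+1)²+t²)`; the defect
`(2x+1)²/((x²+t²)((x+1)²+t²))` is at most `24/((x+t)(x+1+t))`, which telescopes. -/
lemma div_sq_add_sq_le_log_sub_add {x t : ℝ} (hx : 0 ≤ x) (ht : 2 ≤ t) :
    (2 * x + 1) / (x ^ 2 + t ^ 2) ≤ (Real.log ((x + 1) ^ 2 + t ^ 2) - Real.log (x ^ 2 + t ^ 2))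
      + 24 * ((x + t)⁻¹ - (x + 1 + t)⁻¹) := by
  have hA : 0 < x ^ 2 + t ^ 2 := by positivity
  have hB : 0 < (x + 1) ^ 2 + t ^ 2 := by positivity
  have hC : 0 < (x + t) * (x + 1 + t) := by nlinarith
  have hlog : (2 * x + 1) / ((x + 1) ^ 2 + t ^ 2)
      ≤ Real.log ((x + 1) ^ 2 + t ^ 2) - Real.log (x ^ 2 + t ^ 2) := by
    have := Real.log_le_sub_one_of_pos (div_pos hA hB)
    rw [Real.log_div hA.ne' hB.ne', div_sub_one hB.ne'] at this
    have e : (x ^ 2 + t ^ 2 - ((x + 1) ^ 2 + t ^ 2)) / ((x + 1) ^ 2 + t ^ 2)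
        = -((2 * x + 1) / ((x + 1) ^ 2 + t ^ 2)) := by ring
    linarith
  have hgap : (2 * x + 1) / (x ^ 2 + t ^ 2) - (2 * x + 1) / ((x + 1) ^ 2 + t ^ 2)
      ≤ 24 * ((x + t)⁻¹ - (x + 1 + t)⁻¹) := by
    rw [div_sub_div _ _ hA.ne' hB.ne', inv_sub_inv (by positivity) (by positivity),
      mul_div_assoc', div_le_div_iff₀ (by positivity) (by positivity)]
    have h1 : (x + t) * (x + 1 + t) ≤ 3 * (x ^ 2 + t ^ 2) := by
      nlinarith [sq_nonneg (x - t), sq_nonneg (2 * x - 1),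
        mul_nonneg (by linarith : (0 : ℝ) ≤ t - 2) (by linarith : (0 : ℝ) ≤ t + 1)]
    have h2 : (2 * x + 1) ^ 2 ≤ 8 * (x ^ 2 + t ^ 2) := by nlinarith
    nlinarith [mul_le_mul h2 h1 hC.le (by positivity : (0 : ℝ) ≤ 8 * (x ^ 2 + t ^ 2)),
      mul_le_mul_of_nonneg_left (by nlinarith : x ^ 2 + t ^ 2 ≤ (x + 1) ^ 2 + t ^ 2)
        (by positivity : (0 : ℝ) ≤ 24 * (x ^ 2 + t ^ 2))]
  linarith

lemma sum_log_sq_add_sq_sub_le {v t : ℝ} (hv : 0 ≤ v) (hv' : v ≤ 1 / 4) (ht : 2 ≤ t) (n : ℕ) :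
    ∑ j ∈ Finset.range (n + 1),
        (Real.log ((1 / 2 - v + j) ^ 2 + t ^ 2) - Real.log ((v + j) ^ 2 + t ^ 2))
      ≤ (1 / 2 - 2 * v) * (Real.log ((n + 1) ^ 2 + t ^ 2) - 2 * Real.log t + 24 / t) := by
  have hδ : 0 ≤ 1 / 2 - 2 * v := by linarith
  calc _ ≤ ∑ j ∈ Finset.range (n + 1), (1 / 2 - 2 * v) *
          ((Real.log (((j + 1 : ℕ) : ℝ) ^ 2 + t ^ 2) - Real.log ((j : ℝ) ^ 2 + t ^ 2))
            + 24 * (((j : ℝ) + t)⁻¹ - (((j + 1 : ℕ) : ℝ) + t)⁻¹)) := by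
        refine Finset.sum_le_sum fun j _ => (log_sq_add_sq_sub_le hv hv' j.cast_nonneg
          (by linarith)).trans (mul_le_mul_of_nonneg_left ?_ hδ)
        push_cast
        simpa only [add_right_comm _ (1 : ℝ) t] using div_sq_add_sq_le_log_sub_add j.cast_nonneg ht
    _ = (1 / 2 - 2 * v) * (Real.log ((n + 1) ^ 2 + t ^ 2) - 2 * Real.log t + 24 / t
          - 24 / ((n + 1 : ℕ) + t)) := by
        rw [← Finset.mul_sum, Finset.sum_add_distrib, ← Finset.mul_sum,
          Finset.sum_range_sub (fun j : ℕ => Real.log ((j : ℝ) ^ 2 + t ^ 2)),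
          Finset.sum_range_sub' (fun j : ℕ => ((j : ℝ) + t)⁻¹)]
        push_cast
        rw [zero_pow two_ne_zero, zero_add, Real.log_pow]
        ring
    _ ≤ _ := by
        gcongr
        linarith [show 0 ≤ 24 / ((n + 1 : ℕ) + t) by positivity]

lemma normSq_GammaSeq_le {v t : ℝ} (hv : 0 ≤ v) (hv' : v ≤ 1 / 4) (ht : 2 ≤ t) {n : ℕ}
    (hn : n ≠ 0) :
    ((n : ℝ) ^ 2 / ((n + 1) ^ 2 + t ^ 2) * (t ^ 2 * Real.exp (-(24 / t)))) ^ (1 / 2 - 2 * v)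
        * normSq (GammaSeq (v + t * I) n)
      ≤ normSq (GammaSeq (↑(1 / 2 - v) + t * I) n) := by
  have hn0 : (0 : ℝ) < n := by positivity
  set A := (n : ℝ) ^ 2 / ((n + 1) ^ 2 + t ^ 2) * (t ^ 2 * Real.exp (-(24 / t))) with hA_def
  set Pu := ∏ j ∈ Finset.range (n + 1), ((1 / 2 - v + j) ^ 2 + t ^ 2)
  set Pv := ∏ j ∈ Finset.range (n + 1), ((v + j) ^ 2 + t ^ 2)
  have hA : 0 < A := by positivity
  have hPu : 0 < Pu := Finset.prod_pos fun j _ => by positivity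
  have hPv : 0 < Pv := Finset.prod_pos fun j _ => by positivity
  have hlogA : Real.log A = 2 * Real.log n - Real.log ((n + 1) ^ 2 + t ^ 2) + 2 * Real.log t
      - 24 / t := by
    rw [hA_def, Real.log_mul (by positivity) (by positivity), Real.log_div (by positivity)
      (by positivity), Real.log_mul (by positivity) (by positivity), Real.log_exp,
      Real.log_pow, Real.log_pow]
    push_cast
    ring
  have key : A ^ (1 / 2 - 2 * v) * (n : ℝ) ^ (2 * v) * Pu ≤ (n : ℝ) ^ (2 * (1 / 2 - v)) * Pv := by
    rw [← Real.log_le_log_iff (by positivity) (by positivity), Real.log_mul (by positivity)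
      hPu.ne', Real.log_mul (by positivity) (by positivity), Real.log_mul (by positivity) hPv.ne',
      Real.log_rpow hA, Real.log_rpow hn0, Real.log_rpow hn0, hlogA,
      Real.log_prod fun j _ => by positivity, Real.log_prod fun j _ => by positivity]
    have := sum_log_sq_add_sq_sub_le hv hv' ht n
    rw [Finset.sum_sub_distrib] at this
    linarith
  rw [normSq_GammaSeq_add_mul_I _ _ hn, normSq_GammaSeq_add_mul_I _ _ hn, mul_div_assoc',
    div_le_div_iff₀ hPv hPu]
  calc _ = A ^ (1 / 2 - 2 * v) * (n : ℝ) ^ (2 * v) * Pu * (n ! : ℝ) ^ 2 := by ring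
    _ ≤ (n : ℝ) ^ (2 * (1 / 2 - v)) * Pv * (n ! : ℝ) ^ 2 := by gcongr
    _ = _ := by ring

lemma tendsto_sq_div_add_one_sq_add_const (c : ℝ) :
    Tendsto (fun n : ℕ => (n : ℝ) ^ 2 / ((n + 1) ^ 2 + c)) atTop (𝓝 1) := by
  have h0 := tendsto_one_div_atTop_nhds_zero_nat (𝕜 := ℝ)
  have h : Tendsto (fun n : ℕ => 1 / ((1 + 1 / (n : ℝ)) ^ 2 + c * (1 / (n : ℝ)) ^ 2)) atTop
      (𝓝 (1 / ((1 + 0) ^ 2 + c * 0 ^ 2))) :=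
    tendsto_const_nhds.div (((tendsto_const_nhds.add h0).pow 2).add
      (tendsto_const_nhds.mul (h0.pow 2))) (by norm_num)
  norm_num at h
  refine h.congr' ((eventually_ne_atTop 0).mono fun n hn => ?_)
  field_simp

lemma normSq_Gamma_le {v t : ℝ} (hv : 0 ≤ v) (hv' : v ≤ 1 / 4) (ht : 2 ≤ t) :
    (t ^ 2 * Real.exp (-(24 / t))) ^ (1 / 2 - 2 * v) * normSq (Gamma (v + t * I))
      ≤ normSq (Gamma (↑(1 / 2 - v) + t * I)) := by
  have hlim (s : ℂ) := (continuous_normSq.tendsto _).comp (GammaSeq_tendsto_Gamma s)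
  have hfactor := (((tendsto_sq_div_add_one_sq_add_const (t ^ 2)).mul_const
    (t ^ 2 * Real.exp (-(24 / t)))).rpow_const (p := 1 / 2 - 2 * v) (Or.inr (by linarith))).mul
    (hlim (v + t * I))
  rw [one_mul] at hfactor
  exact le_of_tendsto_of_tendsto hfactor (hlim _)
    ((eventually_ne_atTop 0).mono fun n hn => normSq_GammaSeq_le hv hv' ht hn)

lemma pi_rpow_mul_norm_Gamma_lt {σ t : ℝ} (hσ : 0 ≤ σ) (hσ' : σ < 1 / 2) (ht : 48 ≤ t) :
    Real.pi ^ (1 / 2 - σ) * ‖Gamma (σ / 2 + t * I)‖ < ‖Gamma ((1 - σ) / 2 + t * I)‖ := by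
  have hΓ : Gamma (σ / 2 + t * I) ≠ 0 := Gamma_ne_zero_of_im_ne_zero (by simp; linarith)
  have hπ : Real.pi ^ 2 < t ^ 2 * Real.exp (-(24 / t)) := by
    have h1 : 1 / 2 ≤ Real.exp (-(24 / t)) := by
      have : 24 / t ≤ 1 / 2 := by rw [div_le_iff₀ (by linarith)]; linarith
      linarith [Real.add_one_le_exp (-(24 / t))]
    nlinarith [Real.pi_lt_four, Real.pi_pos]
  have hle := normSq_Gamma_le (v := σ / 2) (by linarith) (by linarith) (by linarith : 2 ≤ t)
  rw [show 1 / 2 - 2 * (σ / 2) = 1 / 2 - σ by ring] at hle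
  push_cast at hle
  rw [show (1 / 2 - σ / 2 : ℂ) = (1 - σ) / 2 by ring] at hle
  refine lt_of_pow_lt_pow_left₀ 2 (norm_nonneg _) ?_
  rw [mul_pow, Real.rpow_pow_comm Real.pi_pos.le, Complex.sq_norm, Complex.sq_norm]
  calc _ < (t ^ 2 * Real.exp (-(24 / t))) ^ (1 / 2 - σ) * normSq (Gamma (σ / 2 + t * I)) := by
        gcongr
        exact normSq_pos.2 hΓ
    _ ≤ _ := hle

lemma one_lt_norm_chiFE_s10 {β γ : ℝ} (hβ : 0 ≤ β) (hβ' : β < 1 / 2) (hγ : 96 ≤ γ) :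
    1 < ‖chiFE (β + γ * I)‖ := by
  have h := pi_rpow_mul_norm_Gamma_lt hβ hβ' (t := γ / 2) (by linarith)
  push_cast at h
  have hB : 0 < ‖Gamma (β / 2 + γ / 2 * I)‖ :=
    norm_pos_iff.2 (Gamma_ne_zero_of_im_ne_zero (by simp; linarith))
  have hπ : Real.pi ^ (β - 1 / 2) * Real.pi ^ (1 / 2 - β) = 1 := by
    rw [← Real.rpow_add Real.pi_pos]; simp
  rw [norm_chiFE_eq, one_lt_div hB]
  calc _ = Real.pi ^ (β - 1 / 2) * (Real.pi ^ (1 / 2 - β) * ‖Gamma (β / 2 + γ / 2 * I)‖) := by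
        rw [← mul_assoc, hπ, one_mul]
    _ < _ := by gcongr

lemma norm_chiFE_lt_one_s10 {β γ : ℝ} (hβ : 1 / 2 < β) (hβ' : β ≤ 1) (hγ : 96 ≤ γ) :
    ‖chiFE (β + γ * I)‖ < 1 := by
  have h := pi_rpow_mul_norm_Gamma_lt (σ := 1 - β) (t := γ / 2) (by linarith) (by linarith)
    (by linarith)
  rw [show 1 / 2 - (1 - β) = β - 1 / 2 by ring] at h
  push_cast at h
  rw [show (1 - (1 - β : ℂ)) = β by ring] at h
  have hB : 0 < ‖Gamma (β / 2 + γ / 2 * I)‖ :=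
    norm_pos_iff.2 (Gamma_ne_zero_of_im_ne_zero (by simp; linarith))
  rwa [norm_chiFE_eq, div_lt_one hB]

theorem riemann_hypothesis_for_zetaX :
    ∃ C₀ : ℝ, 0 < C₀ ∧ ∀ X : ℝ, 2 ≤ X → ∀ ρ : ℂ, zetaX X ρ = 0 →
      0 ≤ ρ.re → ρ.re ≤ 1 → C₀ ≤ ρ.im → ρ.re = 1 / 2 := by
  refine ⟨96, by norm_num, fun X _ ρ hζ hβ hβ' hγ => ?_⟩
  have hχ := norm_chiFE_eq_one_of_zetaX_eq_zero hζ
  rw [← re_add_im ρ] at hχ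
  rcases lt_trichotomy ρ.re (1 / 2) with hlt | heq | hgt
  · exact absurd hχ (one_lt_norm_chiFE_s10 hβ hlt hγ).ne'
  · exact heq
  · exact absurd hχ (norm_chiFE_lt_one_s10 hgt hβ' hγ).ne
end
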